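/- For fixed weights w_c > 0 (c ∈ D) and W > 0, and the capture function F(A) = Σ_{c∈A} w_c / (Σ_{c∈A} w_c + W) defined on subsets A ⊆ D, F is monotone (A ⊆ B ⟹ F(A) ≤ F(B)) and submodular: for all A ⊆ B ⊆ D and d ∉ B, F(A ∪ {d}) - F(A) ≥ F(B ∪ {d}) - F(B). -/
import Mathlib


open Finset

private lemma mnl_mono_aux {W x y : ℝ} (hW : 0 < W) (hx : 0 ≤ x) (hxy : x ≤ y) :
    x / (x + W) ≤ y / (y + W) := by
  have hxW : 0 < x + W := by linarith
  have hyW : 0 < y + W := by linarith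
  rw [div_le_div_iff₀ hxW hyW]
  nlinarith

private lemma mnl_diff_aux {W x y t : ℝ} (hW : 0 < W) (hx : 0 ≤ x) (hxy : x ≤ y)
    (ht : 0 ≤ t) :
    (y + t) / ((y + t) + W) - y / (y + W) ≤ (x + t) / ((x + t) + W) - x / (x + W) := by
  have hxW : 0 < x + W := by linarith
  have hyW : 0 < y + W := by linarith
  have hxtW : 0 < x + t + W := by linarith
  have hytW : 0 < y + t + W := by linarith
  have h1 : (y + t) / ((y + t) + W) - y / (y + W) = W * t / ((y + W) * (y + t + W)) := by
    field_simp; ring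
  have h2 : (x + t) / ((x + t) + W) - x / (x + W) = W * t / ((x + W) * (x + t + W)) := by
    field_simp; ring
  rw [h1, h2]
  apply div_le_div_of_nonneg_left (by positivity) (by positivity)
  nlinarith

/-- The MNL capture set function `F(A) = (∑_{c∈A} w_c)/((∑_{c∈A} w_c) + W)`,
with positive weights `w` and `W > 0`, is monotone and submodular. -/
theorem mnl_capture_monotone_submodular
    {D : Type*} [DecidableEq D] [Fintype D]
    (w : D → ℝ) (hw : ∀ c, 0 < w c) (W : ℝ) (hW : 0 < W) :
    (∀ A B : Finset D, A ⊆ B →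
      (∑ c ∈ A, w c) / ((∑ c ∈ A, w c) + W) ≤ (∑ c ∈ B, w c) / ((∑ c ∈ B, w c) + W)) ∧
    (∀ A B : Finset D, A ⊆ B → ∀ d : D, d ∉ B →
      (∑ c ∈ insert d B, w c) / ((∑ c ∈ insert d B, w c) + W)
          - (∑ c ∈ B, w c) / ((∑ c ∈ B, w c) + W)
        ≤ (∑ c ∈ insert d A, w c) / ((∑ c ∈ insert d A, w c) + W)
          - (∑ c ∈ A, w c) / ((∑ c ∈ A, w c) + W)) := by
  have hnn : ∀ A : Finset D, 0 ≤ ∑ c ∈ A, w c := fun A =>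
    Finset.sum_nonneg (fun c _ => (hw c).le)
  constructor
  · intro A B hAB
    exact mnl_mono_aux hW (hnn A)
      (Finset.sum_le_sum_of_subset_of_nonneg hAB (fun c _ _ => (hw c).le))
  · intro A B hAB d hdB
    have hdA : d ∉ A := fun h => hdB (hAB h)
    rw [Finset.sum_insert hdB, Finset.sum_insert hdA, add_comm (w d) _, add_comm (w d) _]
    exact mnl_diff_aux hW (hnn A)
      (Finset.sum_le_sum_of_subset_of_nonneg hAB (fun c _ _ => (hw c).le)) (hw d).le
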